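/- Suppose that I_χ ≠ R, that grade I_χ > |ρ| + 1, that grade I_λ > |ρ| + 1, and that r = k + 1 where k = r + 1 - grade I_χ (so r = l). Then the sequence 0 → 𝓕 →χ 𝓖 →λ 𝓗 is exact (χ is injective and ker λ = im χ), the dual sequence 0 → 𝓗* →λ* 𝓖* →χ* 𝓕* is exact (λ* is injective and ker χ* = im λ*), and moreover I_χ = I_λ. -/

import Mathlib

/-- The ideal generated by the `k × k` minors of a matrix. -/
def Matrix.minorsIdeal {R : Type*} [CommRing R] {p q : ℕ}
    (A : Matrix (Fin p) (Fin q) R) (k : ℕ) : Ideal R :=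
  Ideal.span {x | ∃ (f : Fin k → Fin p) (g : Fin k → Fin q),
    Function.Injective f ∧ Function.Injective g ∧ x = (A.submatrix f g).det}

/-- `I.gradeGE k` means `grade I ≥ k`: there is a weakly `R`-regular sequence of
length `k` consisting of elements of `I`.  (For a proper ideal of a Noetherian
ring such a sequence is automatically a regular sequence, and for `I = R` this
holds for every `k`, corresponding to the convention `grade R = ∞`.) -/
def Ideal.gradeGE {R : Type*} [CommRing R] (I : Ideal R) (k : ℕ) : Prop :=
  ∃ rs : List R, rs.length = k ∧ (∀ x ∈ rs, x ∈ I) ∧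
    RingTheory.Sequence.IsWeaklyRegular R rs

/-- The ideal of maximal minors of a linear map between the standard finite
free modules `R^a` and `R^b`, i.e. the ideal generated by the
`min a b × min a b` minors of the matrix representing the map. -/
noncomputable def LinearMap.maxMinors {R : Type*} [CommRing R] {a b : ℕ}
    (χ : (Fin a → R) →ₗ[R] (Fin b → R)) : Ideal R :=
  (LinearMap.toMatrix' χ).minorsIdeal (min a b)

/-- A map of finite free modules is minimal if the entries of a matrix
representing it generate a proper ideal of `R`. -/
def LinearMap.MinimalFree {R : Type*} [CommRing R] {a b : ℕ}
    (χ : (Fin a → R) →ₗ[R] (Fin b → R)) : Prop :=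
  Ideal.span {x | ∃ i j, LinearMap.toMatrix' χ i j = x} ≠ ⊤

/-!
Write `A`, `B` for the matrices of `χ` and `λ`, and index a complementary pair (`m` rows of `A`,
the other `l` columns of `B`) by an equivalence `σ : Fin m ⊕ Fin l ≃ Fin n`; let `u_σ`, `b_σ` be
the corresponding maximal minors and `w_σ = ±b_σ` with the sign of `σ`. The product of
`[e_{ν(M)}ᵀ; B]` and `[A | e_{σ(L)}]` is block triangular, which gives `u_σ w_ν = u_ν w_σ`. When
both ideals of minors contain a regular pair, two such proportional families divide each other,
so `I_χ = I_λ`. Cramer's rule shows that `u_σ b_σ`, hence `u_σ²`, multiplies `ker B` into `im A`;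
a regular pair in `I_χ` then gives exactness, and the dual statements follow by transposing.

The numerical hypotheses force `n = m + l`: McCoy's rank bound gives `m + l ≤ n`, and the
remaining case `l = 0`, `n = m + 1` is impossible, since the maximal minors of an `(m + 1) × m`
matrix have a free resolution of length two (Hilbert–Burch) and so cannot contain a regular
sequence of length three unless they generate `R`.
-/
open Matrix Pointwise RingTheory.Sequence

section RegularSequence

open Submodule

variable {R P Q : Type*} [CommRing R] [AddCommGroup P] [Module R P] [AddCommGroup Q] [Module R Q]

lemma Submodule.mem_pointwise_smul_top_iff {t : R} {x : P} :
    x ∈ t • (⊤ : Submodule R P) ↔ ∃ y, t • y = x := by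
  simp [Submodule.mem_smul_pointwise_iff_exists]

lemma isWeaklyRegular_pair_iff {t s : R} :
    IsWeaklyRegular P [t, s] ↔ IsSMulRegular P t ∧ IsSMulRegular (QuotSMulTop t P) s := by
  rw [isWeaklyRegular_cons_iff, isWeaklyRegular_singleton_iff]

lemma IsSMulRegular.quotSMulTop_pow {t s : R} (ht : IsSMulRegular P t)
    (hs : IsSMulRegular (QuotSMulTop t P) s) (a : ℕ) :
    IsSMulRegular (QuotSMulTop (t ^ a) P) s := by
  rw [isSMulRegular_quotient_iff_mem_of_smul_mem] at hs ⊢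
  induction a with
  | zero => simp
  | succ a ih =>
    intro x hx
    obtain ⟨p, hp⟩ := mem_pointwise_smul_top_iff.mp hx
    obtain ⟨y, rfl⟩ := mem_pointwise_smul_top_iff.mp <| hs x <|
      mem_pointwise_smul_top_iff.mpr ⟨t ^ a • p, by rw [← hp, pow_succ', mul_smul]⟩
    have hsy : s • y = t ^ a • p := ht <| show t • s • y = t • t ^ a • p by
      rw [smul_comm t s y, ← hp, ← mul_smul, ← pow_succ']
    obtain ⟨z, rfl⟩ :=
      mem_pointwise_smul_top_iff.mp (ih y (mem_pointwise_smul_top_iff.mpr ⟨p, hsy.symm⟩))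
    exact mem_pointwise_smul_top_iff.mpr ⟨z, by rw [pow_succ', mul_smul]⟩

lemma RingTheory.Sequence.IsWeaklyRegular.pow_pair {t s : R} (h : IsWeaklyRegular P [t, s])
    (a b : ℕ) : IsWeaklyRegular P [t ^ a, s ^ b] := by
  rw [isWeaklyRegular_pair_iff] at h ⊢
  exact ⟨h.1.pow a, (h.1.quotSMulTop_pow h.2 a).pow b⟩

lemma RingTheory.Sequence.IsWeaklyRegular.module_of_flat [Module.Flat R P] {rs : List R}
    (h : IsWeaklyRegular R rs) : IsWeaklyRegular P rs :=
  ((TensorProduct.lid R P).isWeaklyRegular_congr rs).mp h.isWeaklyRegular_rTensor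

lemma exists_eq_smul_of_isWeaklyRegular_pair {x y : R} (h : IsWeaklyRegular P [x, y]) {a b : P}
    (hab : y • a = x • b) : ∃ c, a = x • c := by
  obtain ⟨c, hc⟩ := mem_pointwise_smul_top_iff.mp <| mem_of_isSMulRegular_quotient_of_smul_mem
    (isWeaklyRegular_pair_iff.mp h).2 (mem_pointwise_smul_top_iff.mpr ⟨b, hab.symm⟩)
  exact ⟨c, hc.symm⟩

lemma exists_eq_smul_add_smul_of_isWeaklyRegular {x y z : R} (h : IsWeaklyRegular P [x, y, z])
    {w a b : P} (hw : z • w = y • a - x • b) : ∃ p q, w = x • p + y • q := by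
  rw [isWeaklyRegular_cons_iff] at h
  obtain ⟨q', hq'⟩ := exists_eq_smul_of_isWeaklyRegular_pair h.2
    (a := Submodule.Quotient.mk w) (b := Submodule.Quotient.mk a) (by
      rw [← Submodule.Quotient.mk_smul, ← Submodule.Quotient.mk_smul, hw, Submodule.Quotient.eq,
        sub_sub_cancel_left, mem_pointwise_smul_top_iff]
      exact ⟨-b, by rw [smul_neg]⟩)
  obtain ⟨q, rfl⟩ := Submodule.Quotient.mk_surjective _ q'
  rw [← Submodule.Quotient.mk_smul, Submodule.Quotient.eq, mem_pointwise_smul_top_iff] at hq'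
  obtain ⟨p, hp⟩ := hq'
  exact ⟨p, q, by rw [hp, sub_add_cancel]⟩

lemma mem_range_of_smul_mem_range {f : P →ₗ[R] Q} (hf : Function.Injective f) {t s : R}
    (hts : IsWeaklyRegular P [t, s]) (ht : IsSMulRegular Q t) {v : Q}
    (htv : t • v ∈ LinearMap.range f) (hsv : s • v ∈ LinearMap.range f) :
    v ∈ LinearMap.range f := by
  obtain ⟨y, hy⟩ := htv
  obtain ⟨y', hy'⟩ := hsv
  obtain ⟨z, rfl⟩ := exists_eq_smul_of_isWeaklyRegular_pair hts (a := y) (b := y')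
    (hf (by rw [map_smul, map_smul, hy, hy', smul_comm]))
  exact ⟨z, ht <| show t • f z = t • v by rw [← hy, map_smul]⟩

/-- An ideal with a free (or flat) resolution `0 → P → Q → R` of length two has grade at most
two. -/
lemma LinearMap.range_eq_top_of_isWeaklyRegular [Module.Flat R P] [Module.Flat R Q]
    {f : P →ₗ[R] Q} {β : Q →ₗ[R] R} (hf : Function.Injective f) (hexact : ker β = range f)
    {x y z : R} (hx : x ∈ range β) (hy : y ∈ range β) (hz : z ∈ range β)
    (hxyz : IsWeaklyRegular R [x, y, z]) : range β = ⊤ := by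
  -- Lift the Koszul syzygies of `x, y, z` along `f`; regularity of `z`, then of `y`, splits
  -- `vx = f q + x • u`, and applying `β` gives `x = x * β u`.
  have koszul {a b : R} {va vb : Q} (ha : β va = a) (hb : β vb = b) :
      ∃ w, f w = b • va - a • vb := by
    rw [← mem_range, ← hexact, mem_ker, map_sub, map_smul, map_smul, ha, hb, smul_eq_mul,
      smul_eq_mul, mul_comm, sub_self]
  obtain ⟨vx, hvx⟩ := hx
  obtain ⟨vy, hvy⟩ := hy
  obtain ⟨vz, hvz⟩ := hz
  obtain ⟨wxy, hxy⟩ := koszul hvx hvy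
  obtain ⟨wxz, hxz⟩ := koszul hvx hvz
  obtain ⟨wyz, hyz⟩ := koszul hvy hvz
  obtain ⟨p, q, hpq⟩ := exists_eq_smul_add_smul_of_isWeaklyRegular hxyz.module_of_flat
    (w := wxy) (a := wxz) (b := wyz)
    (hf (by simp only [map_sub, map_smul, hxy, hxz, hyz]; module))
  obtain ⟨u, hu⟩ := exists_eq_smul_of_isWeaklyRegular_pair
    ((isWeaklyRegular_append_iff R [x, y] [z]).mp hxyz).1.module_of_flat
    (a := vx - f q) (b := vy + f p) (by
      rw [← sub_eq_zero, ← sub_eq_zero.mpr (congrArg f hpq)]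
      simp only [map_add, map_smul, hxy]
      module)
  have hβf (w : P) : β (f w) = 0 := by rw [← mem_ker, hexact]; exact mem_range_self f w
  refine (Ideal.eq_top_iff_one _).mpr ⟨u, ((isWeaklyRegular_cons_iff R x _).mp hxyz).1 ?_⟩
  change x • β u = x • 1
  rw [← map_smul, ← hu, map_sub, hβf, sub_zero, hvx, smul_eq_mul, mul_one]

end RegularSequence

section ProportionalFamilies

variable {R ι : Type*} [CommRing R] {u w : ι → R}

lemma Ideal.span_range_le_of_forall_dvd (h : ∀ i, w i ∣ u i) :
    Ideal.span (Set.range u) ≤ Ideal.span (Set.range w) := by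
  refine Ideal.span_le.mpr ?_
  rintro _ ⟨i, rfl⟩
  obtain ⟨c, hc⟩ := h i
  rw [hc]
  exact Ideal.mul_mem_right _ _ (Ideal.subset_span ⟨i, rfl⟩)

lemma smul_eq_zero_of_mem_span_range {P : Type*} [AddCommGroup P] [Module R P] {v : P}
    (hu : ∀ i, u i • v = 0) {t : R} (ht : t ∈ Ideal.span (Set.range u)) : t • v = 0 := by
  have : Ideal.span (Set.range u) ≤ LinearMap.ker (LinearMap.toSpanSingleton R P v) :=
    Ideal.span_le.mpr (by rintro _ ⟨i, rfl⟩; exact hu i)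
  simpa using this ht

lemma exists_mul_eq_mul_of_mem_span (h : ∀ i j, u i * w j = u j * w i) {x : R}
    (hx : x ∈ Ideal.span (Set.range u)) : ∃ y, ∀ i, y * u i = x * w i := by
  induction hx using Submodule.span_induction with
  | mem x hx =>
    obtain ⟨j, rfl⟩ := hx
    exact ⟨w j, fun i => by rw [mul_comm, h]⟩
  | zero => exact ⟨0, fun i => by simp⟩
  | add x x' _ _ hx hx' =>
    obtain ⟨y, hy⟩ := hx
    obtain ⟨y', hy'⟩ := hx'
    exact ⟨y + y', fun i => by rw [add_mul, add_mul, hy, hy']⟩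
  | smul a x _ hx =>
    obtain ⟨y, hy⟩ := hx
    exact ⟨a * y, fun i => by rw [smul_eq_mul, mul_assoc, mul_assoc, hy]⟩

lemma exists_eq_mul_of_mul_eq_mul (h : ∀ i j, u i * w j = u j * w i) {t s : R}
    (ht : t ∈ Ideal.span (Set.range u)) (hs : s ∈ Ideal.span (Set.range u))
    (hts : IsWeaklyRegular R [t, s]) : ∃ c, ∀ i, w i = c * u i := by
  have htreg := (isWeaklyRegular_pair_iff.mp hts).1
  obtain ⟨y, hy⟩ := exists_mul_eq_mul_of_mem_span h ht
  obtain ⟨y', hy'⟩ := exists_mul_eq_mul_of_mem_span h hs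
  have hyy' : s * y = t * y' := by
    have hann : t • (t * y' - s * y) = 0 := by
      refine smul_eq_zero_of_mem_span_range (fun i => ?_) ht
      rw [smul_eq_mul]
      linear_combination t * hy' i - s * hy i
    exact (sub_eq_zero.mp (htreg.right_eq_zero_of_smul hann)).symm
  obtain ⟨c, rfl⟩ := exists_eq_smul_of_isWeaklyRegular_pair hts hyy'
  refine ⟨c, fun i => sub_eq_zero.mp (htreg.right_eq_zero_of_smul ?_)⟩
  rw [smul_eq_mul] at hy ⊢
  linear_combination -(hy i)

end ProportionalFamilies

namespace Ideal.gradeGE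

variable {R : Type*} [CommRing R] {I : Ideal R}

lemma of_le {j k : ℕ} (h : I.gradeGE k) (hjk : j ≤ k) : I.gradeGE j := by
  obtain ⟨rs, hlen, hmem, hreg⟩ := h
  rw [← List.take_append_drop j rs, isWeaklyRegular_append_iff] at hreg
  exact ⟨rs.take j, by simp [hlen, hjk], fun x hx => hmem x (List.mem_of_mem_take hx), hreg.1⟩

lemma exists_pair (h : I.gradeGE 2) : ∃ t s, t ∈ I ∧ s ∈ I ∧ IsWeaklyRegular R [t, s] := by
  obtain ⟨rs, hlen, hmem, hreg⟩ := h
  obtain ⟨t, s, rfl⟩ := List.length_eq_two.mp hlen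
  exact ⟨t, s, hmem t (by simp), hmem s (by simp), hreg⟩

lemma exists_triple (h : I.gradeGE 3) :
    ∃ x y z, x ∈ I ∧ y ∈ I ∧ z ∈ I ∧ IsWeaklyRegular R [x, y, z] := by
  obtain ⟨rs, hlen, hmem, hreg⟩ := h
  obtain ⟨x, y, z, rfl⟩ := List.length_eq_three.mp hlen
  exact ⟨x, y, z, hmem x (by simp), hmem y (by simp), hmem z (by simp), hreg⟩

end Ideal.gradeGE

lemma Equiv.exists_comp_inl_eq {M L N : Type*} [Fintype M] [Fintype L] [Fintype N]
    (hcard : Fintype.card M + Fintype.card L = Fintype.card N) {f : M → N}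
    (hf : Function.Injective f) : ∃ σ : M ⊕ L ≃ N, σ ∘ Sum.inl = f := by
  classical
  have : Fintype.card L = Fintype.card ↥(Set.range f)ᶜ := by
    rw [Fintype.card_compl_set, Set.card_range_of_injective hf]
    omega
  exact ⟨(Equiv.sumCongr (Equiv.ofInjective f hf) (Fintype.equivOfCardEq this)).trans
    (Equiv.Set.sumCompl (Set.range f)), rfl⟩

namespace Matrix

variable {R : Type*} [CommRing R] {M L N : Type*}

section MinorInl

variable [Fintype M] [DecidableEq M]

/-- With `σ : M ⊕ L ≃ N` splitting the rows of `A` (and the columns of a `B : Matrix L N R`),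
`A.minorInl σ` is the maximal minor of `A` on the rows `σ (inl _)` and `B.minorInr σ` the maximal
minor of `B` on the complementary columns `σ (inr _)`. -/
def minorInl (A : Matrix N M R) (σ : M ⊕ L ≃ N) : R :=
  (A.submatrix (σ ∘ Sum.inl) id).det

lemma minorInl_smul_eq_adjugate_mulVec (A : Matrix N M R) (σ : M ⊕ L ≃ N) (v : M → R) :
    A.minorInl σ • v = (A.submatrix (σ ∘ Sum.inl) id).adjugate *ᵥ ((A *ᵥ v) ∘ σ ∘ Sum.inl) := by
  have : (A *ᵥ v) ∘ σ ∘ Sum.inl = A.submatrix (σ ∘ Sum.inl) id *ᵥ v := by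
    ext; simp [mulVec, dotProduct]
  rw [this, mulVec_mulVec, adjugate_mul, smul_mulVec, one_mulVec, minorInl]

lemma mulVecLin_injective_of_mem_span {A : Matrix N M R} {t : R}
    (ht : t ∈ Ideal.span (Set.range (A.minorInl (L := L)))) (htreg : IsSMulRegular R t) :
    Function.Injective A.mulVecLin := by
  rw [injective_iff_map_eq_zero]
  intro v hv
  have hu (σ : M ⊕ L ≃ N) : A.minorInl σ • v = 0 := by
    rw [minorInl_smul_eq_adjugate_mulVec, show A *ᵥ v = 0 from hv]
    simp
  exact (IsSMulRegular.pi fun _ => htreg).right_eq_zero_of_smul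
    (smul_eq_zero_of_mem_span_range hu ht)

end MinorInl

section MinorInr

variable [Fintype L] [DecidableEq L]

def minorInr (B : Matrix L N R) (σ : M ⊕ L ≃ N) : R :=
  (B.submatrix id (σ ∘ Sum.inr)).det

lemma minorInr_smul_eq_zero [Fintype M] [Fintype N] {B : Matrix L N R} {σ : M ⊕ L ≃ N}
    {δ : N → R} (hδ : B *ᵥ δ = 0) (hδσ : ∀ j, δ (σ (Sum.inl j)) = 0) : B.minorInr σ • δ = 0 := by
  have hδ' : B.submatrix id (σ ∘ Sum.inr) *ᵥ (δ ∘ σ ∘ Sum.inr) = 0 := by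
    have hsplit : B.submatrix id σ = fromCols (B.submatrix id (σ ∘ Sum.inl))
        (B.submatrix id (σ ∘ Sum.inr)) := by
      ext _ (_ | _) <;> rfl
    have := submatrix_mulVec_equiv B (δ ∘ σ) id σ
    rw [hsplit, fromCols_mulVec] at this
    simpa [Function.comp_def, hδσ, hδ, ← Pi.zero_def] using this
  have hδr (p : L) : B.minorInr σ * δ (σ (Sum.inr p)) = 0 := by
    simpa [minorInr, mulVec_mulVec, adjugate_mul, smul_mulVec] using
      congrFun (congrArg (B.submatrix id (σ ∘ Sum.inr)).adjugate.mulVec hδ') p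
  funext i
  obtain ⟨j | p, rfl⟩ := σ.surjective i
  · simp [hδσ]
  · exact hδr p

lemma minorInl_transpose (B : Matrix L N R) (σ : L ⊕ M ≃ N) :
    Bᵀ.minorInl σ = B.minorInr ((Equiv.sumComm M L).trans σ) := by
  rw [minorInl, ← det_transpose, transpose_submatrix, transpose_transpose]
  rfl

lemma span_range_minorInl_transpose (B : Matrix L N R) :
    Ideal.span (Set.range (Bᵀ.minorInl (L := M))) =
      Ideal.span (Set.range (B.minorInr (M := M))) := by
  congr 1
  ext x
  constructor
  · rintro ⟨σ, rfl⟩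
    exact ⟨_, (minorInl_transpose B σ).symm⟩
  · rintro ⟨σ, rfl⟩
    exact ⟨(Equiv.sumComm L M).trans σ, by rw [minorInl_transpose]; congr; ext; simp⟩

lemma range_proj_comp_mulVecLin_eq_span_minorInr [Fintype N] [DecidableEq N] [Unique L]
    (B : Matrix L N R) (e₀ : M ⊕ L ≃ N) :
    LinearMap.range (LinearMap.proj default ∘ₗ B.mulVecLin) =
      Ideal.span (Set.range (B.minorInr (M := M))) := by
  have hB (σ : M ⊕ L ≃ N) : B.minorInr σ =
      (LinearMap.proj default ∘ₗ B.mulVecLin) (Pi.single (σ (Sum.inr default)) 1) := by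
    simp [minorInr, det_unique]
  refine le_antisymm ?_ (Ideal.span_le.mpr ?_)
  · rintro _ ⟨v, rfl⟩
    refine Ideal.sum_mem _ fun i _ => Ideal.mul_mem_right _ _ (Ideal.subset_span ?_)
    exact ⟨e₀.trans (Equiv.swap (e₀ (Sum.inr default)) i), by simp [hB]⟩
  · rintro _ ⟨σ, rfl⟩
    exact ⟨_, (hB σ).symm⟩

end MinorInr

lemma span_range_minorInr_transpose [Fintype M] [DecidableEq M] (A : Matrix N M R) :
    Ideal.span (Set.range (Aᵀ.minorInr (M := L))) =
      Ideal.span (Set.range (A.minorInl (L := L))) := by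
  simpa using (span_range_minorInl_transpose Aᵀ).symm

section Complementary

variable [Fintype M] [Fintype L] [DecidableEq M] [DecidableEq L]

def relSign (e₀ σ : M ⊕ L ≃ N) : R :=
  ((Equiv.Perm.sign (σ.trans e₀.symm) : ℤ) : R)

lemma relSign_mul_self (e₀ σ : M ⊕ L ≃ N) : relSign (R := R) e₀ σ * relSign e₀ σ = 1 := by
  rw [relSign, ← Int.cast_mul, ← Units.val_mul, Int.units_mul_self, Units.val_one, Int.cast_one]

lemma det_submatrix_eq_relSign_mul {X : Matrix N (M ⊕ L) R} {e₀ σ : M ⊕ L ≃ N} :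
    (X.submatrix e₀ id).det = relSign e₀ σ * (X.submatrix σ id).det := by
  have : X.submatrix e₀ id = (X.submatrix σ id).submatrix (e₀.trans σ.symm) id := by
    ext; simp
  rw [this, det_permute, relSign, ← Equiv.Perm.sign_symm]
  rfl

lemma det_submatrix_eq_relSign_mul' {X : Matrix (M ⊕ L) N R} {e₀ σ : M ⊕ L ≃ N} :
    (X.submatrix id e₀).det = relSign e₀ σ * (X.submatrix id σ).det := by
  rw [← det_transpose, transpose_submatrix, det_submatrix_eq_relSign_mul (σ := σ),
    ← transpose_submatrix, det_transpose]

lemma span_range_relSign_mul_minorInr (B : Matrix L N R) (e₀ : M ⊕ L ≃ N) :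
    Ideal.span (Set.range fun σ => relSign e₀ σ * B.minorInr σ) =
      Ideal.span (Set.range (B.minorInr (M := M))) :=
  le_antisymm (Ideal.span_range_le_of_forall_dvd fun _ => dvd_mul_left _ _)
    (Ideal.span_range_le_of_forall_dvd fun σ =>
      ⟨relSign e₀ σ, by linear_combination -(B.minorInr σ) * relSign_mul_self (R := R) e₀ σ⟩)

lemma det_fromCols_submatrix_one [DecidableEq N] (A : Matrix N M R) (e₀ σ : M ⊕ L ≃ N) :
    ((fromCols A ((1 : Matrix N N R).submatrix id (σ ∘ Sum.inr))).submatrix e₀ id).det =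
      relSign e₀ σ * A.minorInl σ := by
  rw [det_submatrix_eq_relSign_mul (σ := σ)]
  have : (fromCols A ((1 : Matrix N N R).submatrix id (σ ∘ Sum.inr))).submatrix σ id =
      fromBlocks (A.submatrix (σ ∘ Sum.inl) id) 0 (A.submatrix (σ ∘ Sum.inr) id) 1 := by
    ext (i | i) (j | j) <;> simp [one_apply]
  rw [this, det_fromBlocks_zero₁₂, det_one, mul_one, minorInl]

lemma det_fromRows_one_submatrix [DecidableEq N] (B : Matrix L N R) (e₀ ν : M ⊕ L ≃ N) :
    ((fromRows ((1 : Matrix N N R).submatrix (ν ∘ Sum.inl) id) B).submatrix id e₀).det =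
      relSign e₀ ν * B.minorInr ν := by
  rw [det_submatrix_eq_relSign_mul' (σ := ν)]
  have : (fromRows ((1 : Matrix N N R).submatrix (ν ∘ Sum.inl) id) B).submatrix id ν =
      fromBlocks 1 0 (B.submatrix id (ν ∘ Sum.inl)) (B.submatrix id (ν ∘ Sum.inr)) := by
    ext (i | i) (j | j) <;> simp [one_apply]
  rw [this, det_fromBlocks_zero₁₂, det_one, one_mul, minorInr]

variable [Fintype N]

lemma minorInl_mul_minorInr_smul_mem_range {A : Matrix N M R} {B : Matrix L N R}
    (hBA : B * A = 0) {v : N → R} (hv : B *ᵥ v = 0) (σ : M ⊕ L ≃ N) :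
    (A.minorInl σ * B.minorInr σ) • v ∈ LinearMap.range A.mulVecLin := by
  -- Cramer's rule solves `A y = u_σ v` on the rows `σ (inl _)`; the defect `δ` is killed by `b_σ`
  set y := (A.submatrix (σ ∘ Sum.inl) id).adjugate *ᵥ (v ∘ σ ∘ Sum.inl)
  set δ := A.minorInl σ • v - A *ᵥ y with hδ
  have hδσ (j : M) : δ (σ (Sum.inl j)) = 0 := by
    have : (A *ᵥ y) (σ (Sum.inl j)) = (A.submatrix (σ ∘ Sum.inl) id *ᵥ y) j := by
      simp [mulVec, dotProduct]
    rw [hδ, Pi.sub_apply, this, mulVec_mulVec, mul_adjugate, smul_mulVec, one_mulVec]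
    simp [minorInl]
  have hBδ : B *ᵥ δ = 0 := by
    rw [hδ, mulVec_sub, mulVec_smul, hv, mulVec_mulVec, hBA, zero_mulVec, smul_zero, sub_zero]
  have hbδ := minorInr_smul_eq_zero hBδ hδσ
  rw [hδ, smul_sub, sub_eq_zero] at hbδ
  refine ⟨B.minorInr σ • y, ?_⟩
  rw [mulVecLin_apply, mulVec_smul, ← hbδ, smul_smul, mul_comm]

lemma mem_range_mulVecLin_of_mulVec_eq_zero {A : Matrix N M R} {B : Matrix L N R}
    (hBA : B * A = 0) (hAB : ∀ σ, ∃ c, A.minorInl σ = c * B.minorInr σ) {t s : R}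
    (ht : t ∈ Ideal.span (Set.range (A.minorInl (L := L))))
    (hs : s ∈ Ideal.span (Set.range (A.minorInl (L := L)))) (hts : IsWeaklyRegular R [t, s])
    {v : N → R} (hv : B *ᵥ v = 0) : v ∈ LinearMap.range A.mulVecLin := by
  -- a power of each element of `I_A` moves `v` into the image of `A`
  let J : Ideal R := (LinearMap.range A.mulVecLin).comap (LinearMap.toSpanSingleton R (N → R) v)
  have hJ (x : R) (hx : x ∈ J) : x • v ∈ LinearMap.range A.mulVecLin := hx
  have hrad : Ideal.span (Set.range (A.minorInl (L := L))) ≤ J.radical := by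
    refine Ideal.span_le.mpr ?_
    rintro _ ⟨σ, rfl⟩
    obtain ⟨c, hc⟩ := hAB σ
    refine ⟨2, ?_⟩
    have : A.minorInl σ ^ 2 = c * (A.minorInl σ * B.minorInr σ) := by
      rw [sq]; nth_rw 2 [hc]; ring
    rw [this]
    exact J.mul_mem_left c (minorInl_mul_minorInr_smul_mem_range hBA hv σ)
  obtain ⟨a, ha⟩ := hrad ht
  obtain ⟨b, hb⟩ := hrad hs
  have htreg := (isWeaklyRegular_pair_iff.mp hts).1
  exact mem_range_of_smul_mem_range (mulVecLin_injective_of_mem_span ht htreg)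
    (hts.pow_pair a b).module_of_flat (IsSMulRegular.pi fun _ => htreg.pow a) (hJ _ ha)
    (hJ _ hb)

variable [DecidableEq N]

lemma minorInl_mul_relSign_mul_minorInr {A : Matrix N M R} {B : Matrix L N R} (hBA : B * A = 0)
    (e₀ σ τ : M ⊕ L ≃ N) :
    A.minorInl σ * (relSign e₀ τ * B.minorInr τ) =
      A.minorInl τ * (relSign e₀ σ * B.minorInr σ) := by
  -- both sides come from the block triangular product `[e_{τ(M)}ᵀ; B] * [A | e_{σ(L)}]`
  have key : relSign e₀ τ * B.minorInr τ * (relSign e₀ σ * A.minorInl σ) =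
      A.minorInl τ * B.minorInr σ := by
    rw [← det_fromRows_one_submatrix, ← det_fromCols_submatrix_one, ← det_mul,
      submatrix_mul_equiv, submatrix_id_id, fromRows_mul_fromCols, hBA, det_fromBlocks_zero₂₁]
    congr 2 <;> ext <;> simp [mul_apply, one_apply]
  linear_combination relSign e₀ σ * key -
    A.minorInl σ * relSign e₀ τ * B.minorInr τ * relSign_mul_self (R := R) e₀ σ

theorem exact_of_isWeaklyRegular {A : Matrix N M R} {B : Matrix L N R} (hBA : B * A = 0)
    (e₀ : M ⊕ L ≃ N) {t s t' s' : R} (ht : t ∈ Ideal.span (Set.range (A.minorInl (L := L))))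
    (hs : s ∈ Ideal.span (Set.range (A.minorInl (L := L)))) (hts : IsWeaklyRegular R [t, s])
    (ht' : t' ∈ Ideal.span (Set.range (B.minorInr (M := M))))
    (hs' : s' ∈ Ideal.span (Set.range (B.minorInr (M := M))))
    (hts' : IsWeaklyRegular R [t', s']) :
    Function.Injective A.mulVecLin ∧ LinearMap.ker B.mulVecLin = LinearMap.range A.mulVecLin ∧
      Ideal.span (Set.range (A.minorInl (L := L))) =
        Ideal.span (Set.range (B.minorInr (M := M))) := by
  have hcross := minorInl_mul_relSign_mul_minorInr hBA e₀
  rw [← span_range_relSign_mul_minorInr B e₀] at ht' hs' ⊢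
  obtain ⟨c, hc⟩ := exists_eq_mul_of_mul_eq_mul hcross ht hs hts
  obtain ⟨c', hc'⟩ := exists_eq_mul_of_mul_eq_mul (w := A.minorInl)
    (fun σ τ => by linear_combination hcross τ σ) ht' hs' hts'
  refine ⟨mulVecLin_injective_of_mem_span ht (isWeaklyRegular_pair_iff.mp hts).1, ?_,
    le_antisymm (Ideal.span_range_le_of_forall_dvd fun σ => ⟨c', by rw [hc', mul_comm]⟩)
      (Ideal.span_range_le_of_forall_dvd fun σ => ⟨c, by rw [hc, mul_comm]⟩)⟩
  ext v
  refine ⟨fun hv => mem_range_mulVecLin_of_mulVec_eq_zero hBA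
    (fun σ => ⟨c' * relSign e₀ σ, by rw [hc', mul_assoc]⟩) ht hs hts hv, ?_⟩
  rintro ⟨y, rfl⟩
  simp [mulVec_mulVec, hBA]

/-- The witness is the last row of the adjugate of `A` completed by a zero column. -/
lemma exists_mul_eq_zero_minorInr_eq [Unique L] (A : Matrix N M R) (e₀ : M ⊕ L ≃ N) :
    ∃ B : Matrix L N R, B * A = 0 ∧ ∀ σ, B.minorInr σ = relSign e₀ σ * A.minorInl σ := by
  set C := (fromCols A (0 : Matrix N L R)).submatrix e₀ id
  refine ⟨of fun _ i => C.adjugate (Sum.inr default) (e₀.symm i), ?_, fun σ => ?_⟩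
  · ext _ j
    have := congrFun (congrFun (adjugate_mul C) (Sum.inr default)) (Sum.inl j)
    rw [mul_apply, smul_apply, one_apply_ne Sum.inr_ne_inl, smul_zero] at this
    rw [mul_apply, zero_apply, ← this, ← e₀.symm.sum_comp]
    simp [C]
  · have hcol : C.updateCol (Sum.inr default) (Pi.single (e₀.symm (σ (Sum.inr default))) 1) =
        (fromCols A ((1 : Matrix N N R).submatrix id (σ ∘ Sum.inr))).submatrix e₀ id := by
      ext c (j | p)
      · simp [C]
      · rw [Unique.eq_default p]
        simp [C, one_apply, Pi.single_apply, Equiv.eq_symm_apply]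
    rw [← det_fromCols_submatrix_one, ← hcol, ← cramer_apply, cramer_eq_adjugate_mulVec,
      mulVec_single_one, minorInr, det_unique]
    rfl

/-- The maximal minors of a matrix with one column fewer than rows cannot contain a regular
sequence of length three, unless they generate the unit ideal. -/
lemma span_range_minorInl_eq_top [Unique L] {A : Matrix N M R} (e₀ : M ⊕ L ≃ N) {x y z : R}
    (hx : x ∈ Ideal.span (Set.range (A.minorInl (L := L))))
    (hy : y ∈ Ideal.span (Set.range (A.minorInl (L := L))))
    (hz : z ∈ Ideal.span (Set.range (A.minorInl (L := L))))
    (hxyz : IsWeaklyRegular R [x, y, z]) :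
    Ideal.span (Set.range (A.minorInl (L := L))) = ⊤ := by
  obtain ⟨B, hBA, hB⟩ := exists_mul_eq_zero_minorInr_eq A e₀
  have hAB (σ : M ⊕ L ≃ N) : A.minorInl σ = relSign e₀ σ * B.minorInr σ := by
    rw [hB, ← mul_assoc, relSign_mul_self, one_mul]
  have hspan : Ideal.span (Set.range (A.minorInl (L := L))) =
      Ideal.span (Set.range (B.minorInr (M := M))) :=
    le_antisymm (Ideal.span_range_le_of_forall_dvd fun σ => ⟨_, by rw [hAB, mul_comm]⟩)
      (Ideal.span_range_le_of_forall_dvd fun σ => ⟨_, by rw [hB, mul_comm]⟩)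
  have hexact : LinearMap.ker (LinearMap.proj default ∘ₗ B.mulVecLin) =
      LinearMap.range A.mulVecLin := by
    ext v
    refine ⟨fun hv => mem_range_mulVecLin_of_mulVec_eq_zero hBA (fun σ => ⟨_, hAB σ⟩) hx hy
      ((isWeaklyRegular_append_iff R [x, y] [z]).mp hxyz).1
      (funext fun d => by rw [Unique.eq_default d]; exact hv), ?_⟩
    rintro ⟨w, rfl⟩
    simp [mulVec_mulVec, hBA]
  have hinj := mulVecLin_injective_of_mem_span hx ((isWeaklyRegular_cons_iff R x _).mp hxyz).1
  rw [hspan, ← range_proj_comp_mulVecLin_eq_span_minorInr B e₀] at hx hy hz ⊢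
  exact LinearMap.range_eq_top_of_isWeaklyRegular hinj hexact hx hy hz hxyz

end Complementary

lemma minorsIdeal_transpose {p q : ℕ} (A : Matrix (Fin p) (Fin q) R) (k : ℕ) :
    Aᵀ.minorsIdeal k = A.minorsIdeal k := by
  have {p q : ℕ} (A : Matrix (Fin p) (Fin q) R) : Aᵀ.minorsIdeal k ≤ A.minorsIdeal k := by
    refine Ideal.span_le.mpr ?_
    rintro _ ⟨f, g, hf, hg, rfl⟩
    exact Ideal.subset_span ⟨g, f, hg, hf, by rw [← transpose_submatrix, det_transpose]⟩
  exact le_antisymm (this A) (by simpa using this Aᵀ)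

lemma minorsIdeal_eq_span_range_minorInl {m l n : ℕ} (hmln : m + l = n)
    (A : Matrix (Fin n) (Fin m) R) :
    A.minorsIdeal m = Ideal.span (Set.range (A.minorInl (L := Fin l))) := by
  refine le_antisymm (Ideal.span_le.mpr ?_) (Ideal.span_le.mpr ?_)
  · rintro _ ⟨f, g, hf, hg, rfl⟩
    obtain ⟨σ, hσ⟩ := Equiv.exists_comp_inl_eq (L := Fin l) (by simpa using hmln) hf
    have : A.submatrix f g = (A.submatrix (σ ∘ Sum.inl) id).submatrix id
        (Equiv.ofBijective g (Finite.injective_iff_bijective.mp hg)) := by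
      rw [hσ]; rfl
    rw [SetLike.mem_coe, this, det_permute']
    exact Ideal.mul_mem_left _ _ (Ideal.subset_span ⟨σ, rfl⟩)
  · rintro _ ⟨σ, rfl⟩
    exact Ideal.subset_span
      ⟨σ ∘ Sum.inl, id, σ.injective.comp Sum.inl_injective, Function.injective_id, rfl⟩

lemma minorsIdeal_eq_span_range_minorInr {m l n : ℕ} (hmln : m + l = n)
    (B : Matrix (Fin l) (Fin n) R) :
    B.minorsIdeal l = Ideal.span (Set.range (B.minorInr (M := Fin m))) := by
  rw [← minorsIdeal_transpose, minorsIdeal_eq_span_range_minorInl (l := m) (by omega),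
    span_range_minorInl_transpose]

lemma le_rank_map_residueField {p q k : ℕ} {A : Matrix (Fin p) (Fin q) R} {P : Ideal R}
    [P.IsPrime] {t : R} (ht : t ∈ A.minorsIdeal k) (htP : t ∉ P) :
    k ≤ (A.map (algebraMap R P.ResidueField)).rank := by
  obtain ⟨_, ⟨f, g, hf, hg, rfl⟩, hd⟩ : ∃ x ∈ {x | ∃ (f : Fin k → Fin p) (g : Fin k → Fin q),
      Function.Injective f ∧ Function.Injective g ∧ x = (A.submatrix f g).det}, x ∉ P := by
    by_contra! h
    exact htP (Ideal.span_le.mpr h ht)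
  have hdet : ((A.map (algebraMap R P.ResidueField)).submatrix f g).det ≠ 0 := by
    rw [submatrix_map, ← RingHom.mapMatrix_apply, ← RingHom.map_det]
    exact fun h => hd (Ideal.algebraMap_residueField_eq_zero.mp h)
  calc k = ((A.map (algebraMap R P.ResidueField)).submatrix f g).rank := by
        rw [rank_of_det_ne_zero hdet, Fintype.card_fin]
    _ ≤ _ := rank_submatrix_le _ _ _

lemma add_le_of_mul_eq_zero [Nontrivial R] {m l n : ℕ} {A : Matrix (Fin n) (Fin m) R}
    {B : Matrix (Fin l) (Fin n) R} (hBA : B * A = 0) {t t' : R} (ht : t ∈ A.minorsIdeal m)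
    (ht' : t' ∈ B.minorsIdeal l) (hreg : IsSMulRegular R (t * t')) : m + l ≤ n := by
  -- over the residue field of a prime avoiding `t * t'` both matrices keep their full rank
  obtain ⟨P, hP, htt'⟩ : ∃ P : Ideal R, P.IsPrime ∧ t * t' ∉ P := by
    by_contra! h
    obtain ⟨k, hk⟩ := nilpotent_iff_mem_prime.mpr h
    have := hreg.pow k
    rw [hk, IsSMulRegular.zero_iff_subsingleton] at this
    exact not_subsingleton R this
  have hB'A' : B.map (algebraMap R P.ResidueField) * A.map (algebraMap R P.ResidueField) = 0 := by
    rw [← Matrix.map_mul, hBA, Matrix.map_zero _ (map_zero _)]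
  calc m + l ≤ (A.map (algebraMap R P.ResidueField)).rank +
        (B.map (algebraMap R P.ResidueField)).rank :=
        add_le_add (le_rank_map_residueField ht fun h => htt' (P.mul_mem_right _ h))
          (le_rank_map_residueField ht' fun h => htt' (P.mul_mem_left _ h))
    _ ≤ n := by simpa [add_comm] using rank_add_rank_le_card_of_mul_eq_zero hB'A'

end Matrix

section Dual

variable {R : Type*} [CommRing R] {ι κ : Type*} [Fintype ι] [Fintype κ] [DecidableEq ι]
  [DecidableEq κ]

lemma LinearMap.dualMap_eq_comp_mulVecLin (f : (ι → R) →ₗ[R] (κ → R)) :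
    f.dualMap = (Pi.basisFun R ι).dualBasis.equivFun.symm.toLinearMap ∘ₗ
      (LinearMap.toMatrix' f)ᵀ.mulVecLin ∘ₗ (Pi.basisFun R κ).dualBasis.equivFun.toLinearMap := by
  have : f.dualMap = Matrix.toLin (Pi.basisFun R κ).dualBasis (Pi.basisFun R ι).dualBasis
      (LinearMap.toMatrix' f)ᵀ := by
    rw [Matrix.toLin_transpose, Matrix.toLin_eq_toLin', Matrix.toLin'_toMatrix',
      LinearMap.dualMap_def]
  rw [this]
  rfl

lemma LinearMap.dualMap_injective_of_mulVecLin {f : (ι → R) →ₗ[R] (κ → R)}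
    (hf : Function.Injective (LinearMap.toMatrix' f)ᵀ.mulVecLin) :
    Function.Injective f.dualMap := by
  rw [dualMap_eq_comp_mulVecLin]
  exact (Pi.basisFun R ι).dualBasis.equivFun.symm.injective.comp
    (hf.comp (Pi.basisFun R κ).dualBasis.equivFun.injective)

lemma LinearMap.ker_dualMap_eq_range_of_mulVecLin {μ : Type*} [Fintype μ] [DecidableEq μ]
    {f : (ι → R) →ₗ[R] (κ → R)} {g : (κ → R) →ₗ[R] (μ → R)}
    (h : ker (toMatrix' f)ᵀ.mulVecLin = range (toMatrix' g)ᵀ.mulVecLin) :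
    ker f.dualMap = range g.dualMap := by
  rw [dualMap_eq_comp_mulVecLin, dualMap_eq_comp_mulVecLin, LinearEquiv.ker_comp, ker_comp,
    range_comp, LinearEquiv.range_comp, h, Submodule.comap_equiv_eq_map_symm]

end Dual

theorem LinearMap.exact_of_isWeaklyRegular {R : Type*} [CommRing R] {m n l : ℕ}
    {χ : (Fin m → R) →ₗ[R] (Fin n → R)} {lam : (Fin n → R) →ₗ[R] (Fin l → R)}
    (hcomplex : lam.comp χ = 0) (hmln : m + l = n) {t s t' s' : R} (ht : t ∈ χ.maxMinors)
    (hs : s ∈ χ.maxMinors) (hts : IsWeaklyRegular R [t, s]) (ht' : t' ∈ lam.maxMinors)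
    (hs' : s' ∈ lam.maxMinors) (hts' : IsWeaklyRegular R [t', s']) :
    Function.Injective χ ∧ ker lam = range χ ∧ Function.Injective lam.dualMap ∧
      ker χ.dualMap = range lam.dualMap ∧ χ.maxMinors = lam.maxMinors := by
  set A := toMatrix' χ
  set B := toMatrix' lam
  have hBA : B * A = 0 := by rw [← toMatrix'_comp, hcomplex, map_zero]
  have hIχ : χ.maxMinors = Ideal.span (Set.range (A.minorInl (L := Fin l))) := by
    rw [maxMinors, min_eq_left (by omega), minorsIdeal_eq_span_range_minorInl hmln]
  have hIlam : lam.maxMinors = Ideal.span (Set.range (B.minorInr (M := Fin m))) := by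
    rw [maxMinors, min_eq_right (by omega), minorsIdeal_eq_span_range_minorInr hmln]
  rw [hIχ] at ht hs
  rw [hIlam] at ht' hs'
  set e₀ := finSumFinEquiv.trans (finCongr hmln)
  obtain ⟨hinj, hexact, hspan⟩ := Matrix.exact_of_isWeaklyRegular hBA e₀ ht hs hts ht' hs' hts'
  rw [← span_range_minorInl_transpose] at ht' hs'
  rw [← span_range_minorInr_transpose] at ht hs
  obtain ⟨hinj', hexact', -⟩ := Matrix.exact_of_isWeaklyRegular
    (by rw [← transpose_mul, hBA, transpose_zero]) ((Equiv.sumComm _ _).trans e₀) ht' hs' hts' ht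
    hs hts
  have hχ : χ = A.mulVecLin := by rw [← Matrix.toLin'_apply', Matrix.toLin'_toMatrix']
  have hlam : lam = B.mulVecLin := by rw [← Matrix.toLin'_apply', Matrix.toLin'_toMatrix']
  exact ⟨hχ ▸ hinj, hχ ▸ hlam ▸ hexact, dualMap_injective_of_mulVecLin hinj',
    ker_dualMap_eq_range_of_mulVecLin hexact', hIχ.trans (hspan.trans hIlam.symm)⟩

theorem stmt6_general {R : Type*} [CommRing R]
    {m n l : ℕ} (hmn : m ≤ n) (hln : l ≤ n)
    (χ : (Fin m → R) →ₗ[R] (Fin n → R)) (lam : (Fin n → R) →ₗ[R] (Fin l → R))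
    (hcomplex : lam.comp χ = 0)
    (hχproper : χ.maxMinors ≠ ⊤) (g : ℕ)
    (hg1 : χ.maxMinors.gradeGE g)
    (hgbig : ((n : ℤ) - m - l).natAbs + 1 < g)
    (hlam : lam.maxMinors.gradeGE (((n : ℤ) - m - l).natAbs + 2))
    (hr : n - m = (n - m + 1 - g) + 1) :
    Function.Injective χ ∧ LinearMap.ker lam = LinearMap.range χ ∧
      Function.Injective lam.dualMap ∧
      LinearMap.ker χ.dualMap = LinearMap.range lam.dualMap ∧
      χ.maxMinors = lam.maxMinors := by
  have : Nontrivial R :=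
    not_subsingleton_iff_nontrivial.mp fun _ => hχproper (Subsingleton.elim _ _)
  have hIχ : χ.maxMinors = (LinearMap.toMatrix' χ).minorsIdeal m := by
    rw [LinearMap.maxMinors, min_eq_left hmn]
  obtain ⟨t, s, ht, hs, hts⟩ := (hg1.of_le (by omega)).exists_pair
  obtain ⟨t', s', ht', hs', hts'⟩ := (hlam.of_le (by omega)).exists_pair
  have hmln : m + l = n := by
    have := add_le_of_mul_eq_zero (by rw [← LinearMap.toMatrix'_comp, hcomplex, map_zero])
      (hIχ ▸ ht) (by rwa [LinearMap.maxMinors, min_eq_right hln] at ht')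
      ((isWeaklyRegular_pair_iff.mp hts).1.mul (isWeaklyRegular_pair_iff.mp hts').1)
    -- `hr` forces `g = 2` or `n = m + 1`, and then McCoy's bound leaves only `l ≤ 1`
    rcases (by omega : m + l = n ∨ (l = 0 ∧ n = m + 1 ∧ 3 ≤ g)) with h | ⟨rfl, rfl, hg3⟩
    · exact h
    obtain ⟨x, y, z, hx, hy, hz, hxyz⟩ := (hg1.of_le hg3).exists_triple
    rw [hIχ, minorsIdeal_eq_span_range_minorInl (l := 1) rfl] at hx hy hz hχproper
    exact absurd (span_range_minorInl_eq_top finSumFinEquiv hx hy hz hxyz) hχproper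
  exact LinearMap.exact_of_isWeaklyRegular hcomplex hmln ht hs hts ht' hs' hts'

theorem stmt6 {R : Type*} [CommRing R] [IsNoetherianRing R]
    {m n l : ℕ} (hmn : m ≤ n) (hln : l ≤ n)
    (χ : (Fin m → R) →ₗ[R] (Fin n → R)) (lam : (Fin n → R) →ₗ[R] (Fin l → R))
    (hcomplex : lam.comp χ = 0)
    (hχproper : χ.maxMinors ≠ ⊤) (g : ℕ)
    (hg1 : χ.maxMinors.gradeGE g) (hg2 : ¬ χ.maxMinors.gradeGE (g + 1))
    (hgbig : ((n : ℤ) - m - l).natAbs + 1 < g)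
    (hlam : lam.maxMinors.gradeGE (((n : ℤ) - m - l).natAbs + 2))
    (hr : n - m = (n - m + 1 - g) + 1) :
    Function.Injective χ ∧ LinearMap.ker lam = LinearMap.range χ ∧
      Function.Injective lam.dualMap ∧
      LinearMap.ker χ.dualMap = LinearMap.range lam.dualMap ∧
      χ.maxMinors = lam.maxMinors :=
  stmt6_general hmn hln χ lam hcomplex hχproper g hg1 hgbig hlam hr
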